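/- The sum of 1/(bd(b+d)) over all pairs of coprime positive integers (b,d) converges and equals 2. -/

import Mathlib

/-!
Every coprime pair `(b, d)` is uniquely `(r + k d, d)` with `1 ≤ r ≤ d`, `gcd r d = 1`, `k ≥ 0`,
and along such a progression the summand telescopes,
`1 / (b d (b + d)) = (1 / b - 1 / (b + d)) / d²`, so the sum is `S = ∑ 1 / (r d²)` over these
`(r, d)`. Apart from `(1, 1)`, which contributes `1`, they are exactly the pairs `(b, b + c)`
with `b, c` positive and coprime, whence `S = 1 + V` with `V = ∑ 1 / (b (b + c)²)`. Since
`1 / (b c (b + c)) = 1 / (b (b + c)²) + 1 / (c (b + c)²)`, symmetry gives `S = 2 V`; so `S = 2`.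
-/

open Filter Topology

theorem hasSum_sub_succ_of_antitone {u : ℕ → ℝ} (hu : Antitone u)
    (hlim : Tendsto u atTop (𝓝 0)) : HasSum (fun k ↦ u k - u (k + 1)) (u 0) := by
  rw [hasSum_iff_tendsto_nat_of_nonneg (fun k ↦ sub_nonneg.2 (hu k.le_succ))]
  simp_rw [Finset.sum_range_sub']
  simpa using tendsto_const_nhds.sub hlim

theorem hasSum_one_div_mul_add_nat_mul (a d : ℝ) (ha : 0 < a) (hd : 0 < d) :
    HasSum (fun k : ℕ ↦ 1 / ((a + k * d) * d * (a + k * d + d))) (1 / (a * d ^ 2)) := by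
  have hpos (k : ℕ) : 0 < a + k * d := by positivity
  set u : ℕ → ℝ := fun k ↦ 1 / (d ^ 2 * (a + k * d))
  have hu : Antitone u := fun m n hmn ↦ by
    have : (m : ℝ) * d ≤ n * d := by gcongr
    simp only [u]; have := hpos m; gcongr
  have hlim : Tendsto u atTop (𝓝 0) := by
    simp only [u, one_div]
    exact (tendsto_atTop_add_const_left _ a
      (tendsto_natCast_atTop_atTop.atTop_mul_const hd)).const_mul_atTop (by positivity)
      |>.inv_tendsto_atTop
  convert hasSum_sub_succ_of_antitone hu hlim using 1
  · funext k
    have := hpos k; have := hpos (k + 1)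
    simp only [u]; push_cast; field_simp; ring
  · simp only [u, Nat.cast_zero, zero_mul, add_zero]; ring

theorem rpow_three_halves_mul_le {x y : ℝ} (hx : 0 ≤ x) (hy : 0 ≤ y) :
    x ^ (3 / 2 : ℝ) * y ^ (3 / 2 : ℝ) ≤ x * y * (x + y) := by
  have h32 (z : ℝ) (hz : 0 ≤ z) : z ^ (3 / 2 : ℝ) = z * √z := by
    rw [show (3 / 2 : ℝ) = 1 + 1 / 2 by norm_num, Real.rpow_add' hz (by norm_num),
      Real.rpow_one, Real.sqrt_eq_rpow]
  have hsqrt : √x * √y ≤ x + y := by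
    rw [← Real.sqrt_mul hx, Real.sqrt_le_iff]
    constructor <;> nlinarith
  rw [h32 x hx, h32 y hy]
  calc x * √x * (y * √y) = x * y * (√x * √y) := by ring
    _ ≤ x * y * (x + y) := by gcongr

namespace MordellTornheim

abbrev CoprimePair := {p : ℕ × ℕ // 0 < p.1 ∧ 0 < p.2 ∧ Nat.gcd p.1 p.2 = 1}

/-- `(r, d)` with `r` the representative in `[1, d]` of a unit modulo `d`; only `(1, 1)` has
`r = d`. -/
abbrev ReducedResidue := {p : ℕ × ℕ // 0 < p.1 ∧ p.1 ≤ p.2 ∧ Nat.gcd p.1 p.2 = 1}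

/-- Writing `b = r + k * d` with `1 ≤ r ≤ d`, i.e. `r - 1 = (b - 1) % d` and `k = (b - 1) / d`. -/
def progressionEquiv : ReducedResidue × ℕ ≃ CoprimePair where
  toFun x := ⟨(x.1.1.1 + x.2 * x.1.1.2, x.1.1.2), by
    obtain ⟨⟨⟨r, d⟩, hr, hrd, hg⟩, k⟩ := x
    dsimp only at hr hrd hg ⊢
    exact ⟨by omega, by omega, by rwa [Nat.gcd_add_mul_right_left]⟩⟩
  invFun y := (⟨((y.1.1 - 1) % y.1.2 + 1, y.1.2), by
    obtain ⟨⟨b, d⟩, hb, hd, hg⟩ := y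
    dsimp only at hb hd hg
    show 0 < (b - 1) % d + 1 ∧ (b - 1) % d + 1 ≤ d ∧ Nat.gcd ((b - 1) % d + 1) d = 1
    have hmod := Nat.mod_lt (b - 1) hd
    have hb_eq := Nat.mod_add_div' (b - 1) d
    refine ⟨by omega, by omega, ?_⟩
    rwa [← Nat.gcd_add_mul_right_left _ _ ((b - 1) / d),
      show (b - 1) % d + 1 + (b - 1) / d * d = b by omega]⟩, (y.1.1 - 1) / y.1.2)
  left_inv := by
    rintro ⟨⟨⟨r, d⟩, hr, hrd, hg⟩, k⟩
    have hsub : r + k * d - 1 = (r - 1) + k * d := by omega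
    have hlt : r - 1 < d := by omega
    ext
    · simp only [hsub, Nat.add_mul_mod_self_right, Nat.mod_eq_of_lt hlt]; omega
    · rfl
    · simp only [hsub, Nat.add_mul_div_right _ _ (by omega : 0 < d), Nat.div_eq_of_lt hlt,
        zero_add]
  right_inv := by
    rintro ⟨⟨b, d⟩, hb, hd, hg⟩
    have := Nat.mod_add_div' (b - 1) d
    dsimp only at *
    ext
    · dsimp only; omega
    · rfl

def swap : CoprimePair ≃ CoprimePair :=
  (Equiv.prodComm ℕ ℕ).subtypeEquiv fun p ↦ by
    simp only [Equiv.prodComm_apply, Prod.fst_swap, Prod.snd_swap, Nat.gcd_comm p.2]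
    tauto

def toResidue (x : CoprimePair) : ReducedResidue :=
  ⟨(x.1.1, x.1.1 + x.1.2), x.2.1, Nat.le_add_right _ _, by
    rw [Nat.gcd_self_add_right]; exact x.2.2.2⟩

def oneOne : ReducedResidue := ⟨(1, 1), by norm_num⟩

theorem toResidue_injective : Function.Injective toResidue := by
  rintro ⟨⟨b, c⟩, _⟩ ⟨⟨b', c'⟩, _⟩ h
  simp only [toResidue, Subtype.mk.injEq, Prod.mk.injEq] at h
  ext <;> dsimp only <;> omega

theorem range_toResidue : Set.range toResidue = {oneOne}ᶜ := by
  ext ⟨⟨r, d⟩, hr, hrd, hg⟩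
  dsimp only at hr hrd hg
  simp only [Set.mem_range, Set.mem_compl_iff, Set.mem_singleton_iff, oneOne, toResidue,
    Subtype.ext_iff, Prod.ext_iff]
  constructor
  · rintro ⟨y, hyr, hyd⟩ ⟨hr1, hd1⟩
    have := y.2.2.1
    omega
  · intro hne
    have hlt : r < d := by
      refine lt_of_le_of_ne hrd fun hrd_eq ↦ hne ⟨?_, ?_⟩ <;>
        rw [hrd_eq, Nat.gcd_self] at hg <;> omega
    exact ⟨⟨(r, d - r), hr, Nat.sub_pos_of_lt hlt, by rwa [Nat.gcd_sub_self_right hrd]⟩,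
      rfl, Nat.add_sub_cancel' hrd⟩

noncomputable def mtTerm (x : CoprimePair) : ℝ := 1 / ((x.1.1 : ℝ) * x.1.2 * (x.1.1 + x.1.2))

noncomputable def halfTerm (x : CoprimePair) : ℝ := 1 / ((x.1.1 : ℝ) * (x.1.1 + x.1.2) ^ 2)

noncomputable def residueTerm (j : ReducedResidue) : ℝ := 1 / ((j.1.1 : ℝ) * j.1.2 ^ 2)

theorem cast_fst_pos (x : CoprimePair) : (0 : ℝ) < x.1.1 := by exact_mod_cast x.2.1

theorem cast_snd_pos (x : CoprimePair) : (0 : ℝ) < x.1.2 := by exact_mod_cast x.2.2.1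

theorem summable_mtTerm : Summable mtTerm := by
  have h32 : Summable fun n : ℕ ↦ 1 / (n : ℝ) ^ (3 / 2 : ℝ) :=
    Real.summable_one_div_nat_rpow.2 (by norm_num)
  refine ((h32.mul_of_nonneg h32 (fun _ ↦ by positivity) (fun _ ↦ by positivity)).comp_injective
    Subtype.val_injective).of_nonneg_of_le (fun x ↦ ?_) (fun x ↦ ?_)
  · have := cast_fst_pos x; have := cast_snd_pos x
    unfold mtTerm; positivity
  · have := cast_fst_pos x; have := cast_snd_pos x
    simp only [Function.comp_apply, mtTerm, div_mul_div_comm, one_mul]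
    exact one_div_le_one_div_of_le (by positivity)
      (rpow_three_halves_mul_le (by positivity) (by positivity))

theorem halfTerm_add_halfTerm_swap (x : CoprimePair) :
    halfTerm x + halfTerm (swap x) = mtTerm x := by
  have := cast_fst_pos x; have := cast_snd_pos x
  simp only [halfTerm, mtTerm, swap, Equiv.subtypeEquiv_apply, Equiv.prodComm_apply,
    Prod.fst_swap, Prod.snd_swap]
  field_simp
  ring

theorem summable_halfTerm : Summable halfTerm :=
  summable_mtTerm.of_nonneg_of_le
    (fun x ↦ by have := cast_fst_pos x; have := cast_snd_pos x; unfold halfTerm; positivity)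
    (fun x ↦ by
      have := cast_fst_pos (swap x); have := cast_snd_pos (swap x)
      rw [← halfTerm_add_halfTerm_swap x, le_add_iff_nonneg_right]
      unfold halfTerm; positivity)

theorem hasSum_mtTerm_progressionEquiv (j : ReducedResidue) :
    HasSum (fun k ↦ mtTerm (progressionEquiv (j, k))) (residueTerm j) := by
  have hr : (0 : ℝ) < j.1.1 := by exact_mod_cast j.2.1
  have hd : (0 : ℝ) < j.1.2 := by exact_mod_cast j.2.1.trans_le j.2.2.1
  rw [residueTerm]
  convert hasSum_one_div_mul_add_nat_mul _ _ hr hd using 2 with k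
  simp only [mtTerm, progressionEquiv, Equiv.coe_fn_mk]
  push_cast
  ring

theorem residueTerm_toResidue (x : CoprimePair) : residueTerm (toResidue x) = halfTerm x := by
  simp only [residueTerm, halfTerm, toResidue]
  push_cast
  ring

theorem residueTerm_oneOne : residueTerm oneOne = 1 := by
  simp [residueTerm, oneOne]

theorem hasSum_residueTerm_ite {V : ℝ} (hV : HasSum halfTerm V) :
    HasSum (fun j ↦ if j = oneOne then 0 else residueTerm j) V := by
  refine (toResidue_injective.hasSum_iff fun j hj ↦ ?_).1 ?_
  · rw [range_toResidue, Set.mem_compl_iff, not_not, Set.mem_singleton_iff] at hj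
    simp [hj]
  · convert hV using 1
    funext x
    have : toResidue x ≠ oneOne := by
      simpa [range_toResidue] using Set.mem_range_self (f := toResidue) x
    simp [this, residueTerm_toResidue]

end MordellTornheim

open MordellTornheim in
theorem sum_coprime_mt :
    HasSum (fun x : {p : ℕ × ℕ // 0 < p.1 ∧ 0 < p.2 ∧ Nat.gcd p.1 p.2 = 1} =>
      1 / ((x.val.1 : ℝ) * (x.val.2 : ℝ) * ((x.val.1 : ℝ) + x.val.2))) 2 := by
  change HasSum mtTerm 2
  obtain ⟨S, hS⟩ := summable_mtTerm
  obtain ⟨V, hV⟩ := summable_halfTerm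
  have hres : HasSum residueTerm S :=
    (progressionEquiv.hasSum_iff.2 hS).prod_fiberwise hasSum_mtTerm_progressionEquiv
  have hS_one : S = V + 1 := by
    rw [eq_add_of_hasSum_ite hres oneOne V (hasSum_residueTerm_ite hV), residueTerm_oneOne]
  have hS_two : S = V + V :=
    hS.unique <| by
      simpa only [Function.comp_apply, halfTerm_add_halfTerm_swap] using
        hV.add (swap.hasSum_iff.2 hV)
  convert hS using 1
  linarith
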